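/- For every fixed cut Ω ⊆ [n], the function S ↦ f(Ω,S) is submodular: f(Ω,S₁) + f(Ω,S₂) ≥ f(Ω, S₁ ∪ S₂) + f(Ω, S₁ ∩ S₂) for all subsets S₁, S₂ ⊆ [n]. -/

import Mathlib

open Finset

/-- The η×η shift-type block `D^{η−m}` over GF(2): entry (i,j) is 1 iff
`j < m` and `i = j + (η − m)`. -/
def Dblk (η m : ℕ) : Matrix (Fin η) (Fin η) (ZMod 2) :=
  Matrix.of fun i j => if (j : ℕ) < m ∧ (i : ℕ) = (j : ℕ) + (η - m) then 1 else 0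

/-- Row-block index set of the transfer matrix: `{d} ∪ (Ωᶜ ∩ Sᶜ)`, with `0`
playing the role of the destination `d` and relays being `1,…,n`. -/
def rowIdx (n : ℕ) (Ω S : Finset ℕ) : Finset ℕ :=
  insert 0 ((Finset.Icc 1 n \ Ω) \ S)

/-- Column-block index set of the transfer matrix: `{s} ∪ (Ω ∩ S)`, with `0`
playing the role of the source `s`. -/
def colIdx (Ω S : Finset ℕ) : Finset ℕ :=
  insert 0 (Ω ∩ S)

/-- `f(Ω,S)`: rank over GF(2) of the transfer matrix `F_{Ω,S}`, whose block in
row block `i` and column block `j` is `D^{η−ℓ i j}` (here `ℓ i j` encodes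
`ℓ_{i,j}`, with index `0` standing for `d` in the first slot and for `s` in the
second slot). -/
noncomputable def fRank (n η : ℕ) (ℓ : ℕ → ℕ → ℕ) (Ω S : Finset ℕ) : ℕ :=
  Matrix.rank
    (Matrix.of fun (p : ↥(rowIdx n Ω S) × Fin η) (q : ↥(colIdx Ω S) × Fin η) =>
      Dblk η (ℓ (p.1 : ℕ) (q.1 : ℕ)) p.2 q.2)

/-- The `(n+2) × (n+2)` real matrix `P`. -/
noncomputable def Pmat (n η : ℕ) (ℓ : ℕ → ℕ → ℕ) : Matrix (Fin (n+2)) (Fin (n+2)) ℝ :=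
  Matrix.of fun i j =>
    if (i : ℕ) = 0 then (if (j : ℕ) = 0 then 0 else 1)
    else if (j : ℕ) = 0 then 1
    else -(fRank n η ℓ (Finset.Icc (i : ℕ) n)
        (if (j : ℕ) = n + 1 then (∅ : Finset ℕ) else {(j : ℕ)}) : ℝ)

/-- `P̃_i`: determinant of the submatrix of `P` obtained by deleting row `0`
and column `i`. -/
noncomputable def Pminor (n η : ℕ) (ℓ : ℕ → ℕ → ℕ) (i : Fin (n+2)) : ℝ :=
  ((Pmat n η ℓ).submatrix Fin.succ i.succAbove).det

/-- Feasibility for the LP defining the approximate capacity `C^LD`. -/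
def FeasLD (n η : ℕ) (ℓ : ℕ → ℕ → ℕ) (t : ℝ) (lam : Finset ℕ → ℝ) : Prop :=
  (∀ S ⊆ Finset.Icc 1 n, 0 ≤ lam S) ∧
  (∑ S ∈ (Finset.Icc 1 n).powerset, lam S) ≤ 1 ∧
  ∀ Ω ⊆ Finset.Icc 1 n,
    t ≤ ∑ S ∈ (Finset.Icc 1 n).powerset, lam S * (fRank n η ℓ Ω S : ℝ)

/-- The approximate capacity `C^LD`. -/
noncomputable def CLD (n η : ℕ) (ℓ : ℕ → ℕ → ℕ) : ℝ :=
  sSup {t : ℝ | ∃ lam, FeasLD n η ℓ t lam}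

/-- Feasibility for the relaxed LP defining `C^U`. -/
def FeasU (n η : ℕ) (ℓ : ℕ → ℕ → ℕ) (t : ℝ) (lam : Finset ℕ → ℝ) : Prop :=
  (∀ S ⊆ Finset.Icc 1 n, 0 ≤ lam S) ∧
  (∑ S ∈ (Finset.Icc 1 n).powerset, lam S) ≤ 1 ∧
  ∀ i ∈ Finset.Icc 1 (n+1),
    t ≤ ∑ S ∈ (Finset.Icc 1 n).powerset, lam S * (fRank n η ℓ (Finset.Icc i n) S : ℝ)

/-- The relaxed value `C^U`. -/
noncomputable def CU (n η : ℕ) (ℓ : ℕ → ℕ → ℕ) : ℝ :=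
  sSup {t : ℝ | ∃ lam, FeasU n η ℓ t lam}

/-- The set `Ŝ = {∅, {1}, …, {n}}` of states with at most one relay transmitting. -/
def SHat (n : ℕ) : Finset (Finset ℕ) :=
  insert ∅ ((Finset.Icc 1 n).image fun i => {i})

open Fin.NatCast in
/-- The schedule `λ*` induced by a solution vector `v = (t*, λ*_{{1}}, …, λ*_{{n}}, λ*_∅)`
of the linear system `P·v = e₀`: it assigns `v i` to the state `{i}` (for `i ∈ [n]`),
`v (n+1)` to `∅`, and `0` to any other state. -/
noncomputable def lamStar (n : ℕ) (v : Fin (n+2) → ℝ) (S : Finset ℕ) : ℝ :=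
  (if S = ∅ then v (Fin.last (n+1)) else 0) +
  ∑ i ∈ Finset.Icc 1 n, if S = {i} then v (i : Fin (n+2)) else 0

/-! For a matrix `A` and sets of rows `R` and columns `C`, restriction to the rows `R` has kernel
`Z_R`, the vectors vanishing on `R`; hence `rank A[R, C] = dim (span (columns of A in C) + Z_R) -
dim Z_R`. Passing from `(C₁, R₁), (C₂, R₂)` to `(C₁ ∪ C₂, R₁ ∩ R₂)` and `(C₁ ∩ C₂, R₁ ∪ R₂)`, the
spaces `Z_R` go exactly to their sum and intersection and the augmented column spaces into theirs,
so the modular law for dimensions makes the rank submodular. `F_{Ω,S}` is the submatrix of one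
fixed block matrix obtained by deleting the row blocks of `S` and keeping the column blocks of
`{s} ∪ (Ω ∩ S)`. -/

open Module

namespace Submodule

variable {R ι M : Type*} [Semiring R] [AddCommMonoid M] [Module R M]

theorem pi_union (s t : Set ι) (p : ι → Submodule R M) :
    pi (s ∪ t) p = pi s p ⊓ pi t p := by
  ext f
  simp only [mem_pi, mem_inf, Set.mem_union, or_imp, forall_and]

theorem pi_le_pi_of_subset {s t : Set ι} (h : s ⊆ t) (p : ι → Submodule R M) : pi t p ≤ pi s p :=
  fun _ hf i hi => hf i (h hi)

theorem pi_inter (s t : Set ι) (p : ι → Submodule R M) :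
    pi (s ∩ t) p = pi s p ⊔ pi t p := by
  refine le_antisymm (fun f hf => ?_)
    (sup_le (pi_le_pi_of_subset Set.inter_subset_left p) (pi_le_pi_of_subset Set.inter_subset_right p))
  rw [mem_pi] at hf
  rw [← Set.indicator_compl_add_self s f]
  refine add_mem_sup (fun i hi => ?_) (fun i hi => ?_)
  · simp [Set.indicator_of_notMem (Set.notMem_compl_iff.mpr hi)]
  · by_cases his : i ∈ s
    · simpa [his] using hf i ⟨his, hi⟩
    · simp [his]

end Submodule

namespace LinearMap

theorem ker_funLeft {R M ι κ : Type*} [Semiring R] [AddCommMonoid M] [Module R M] (e : κ → ι) :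
    ker (funLeft R M e) = Submodule.pi (Set.range e) fun _ => ⊥ := by
  ext g
  simp [Submodule.mem_pi, funext_iff]

theorem finrank_map_add_finrank_ker {K V V₂ : Type*} [DivisionRing K] [AddCommGroup V]
    [Module K V] [AddCommGroup V₂] [Module K V₂] [FiniteDimensional K V]
    (f : V →ₗ[K] V₂) (p : Submodule K V) :
    finrank K (p.map f) + finrank K (ker f) = finrank K ↥(p ⊔ ker f) := by
  have hrange : range (f.domRestrict (p ⊔ ker f)) = p.map f := by
    rw [range_domRestrict, Submodule.map_sup, le_ker_iff_map.mp le_rfl, sup_bot_eq]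
  have hker : finrank K (ker (f.domRestrict (p ⊔ ker f))) = finrank K (ker f) := by
    rw [ker_domRestrict]
    exact (Submodule.comapSubtypeEquivOfLe le_sup_right).finrank_eq
  rw [← hrange, ← hker, finrank_range_add_finrank_ker]

end LinearMap

namespace Matrix

variable {K m n m₀ n₀ : Type*}

theorem rank_submatrix_eq_finrank_map {R : Type*} [CommSemiring R] [Fintype n₀]
    (A : Matrix m n R) (e : m₀ → m) (c : n₀ → n) :
    (A.submatrix e c).rank =
      finrank R ((Submodule.span R (A.col '' Set.range c)).map (LinearMap.funLeft R R e)) := by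
  rw [rank_eq_finrank_span_cols, Submodule.map_span, ← Set.range_comp, ← Set.range_comp]
  rfl

theorem rank_submatrix_add_finrank_pi_bot [Field K] [Fintype m] [Fintype n₀] (A : Matrix m n K)
    (e : m₀ → m) (c : n₀ → n) :
    (A.submatrix e c).rank + finrank K (Submodule.pi (Set.range e) fun _ => (⊥ : Submodule K K)) =
      finrank K ↥(Submodule.span K (A.col '' Set.range c) ⊔
        Submodule.pi (Set.range e) fun _ => ⊥) := by
  rw [rank_submatrix_eq_finrank_map, ← LinearMap.ker_funLeft,
    LinearMap.finrank_map_add_finrank_ker]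

theorem rank_submatrix_add_rank_submatrix_le [Field K] [Fintype m] (A : Matrix m n K)
    {m₁ m₂ m₃ m₄ n₁ n₂ n₃ n₄ : Type*} [Fintype n₁] [Fintype n₂] [Fintype n₃] [Fintype n₄]
    {e₁ : m₁ → m} {e₂ : m₂ → m} {eSup : m₃ → m} {eInf : m₄ → m}
    {c₁ : n₁ → n} {c₂ : n₂ → n} {cSup : n₃ → n} {cInf : n₄ → n}
    (heSup : Set.range eSup = Set.range e₁ ∩ Set.range e₂)
    (heInf : Set.range eInf = Set.range e₁ ∪ Set.range e₂)
    (hcSup : Set.range cSup ⊆ Set.range c₁ ∪ Set.range c₂)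
    (hcInf : Set.range cInf ⊆ Set.range c₁ ∩ Set.range c₂) :
    (A.submatrix eSup cSup).rank + (A.submatrix eInf cInf).rank ≤
      (A.submatrix e₁ c₁).rank + (A.submatrix e₂ c₂).rank := by
  have h₁ := rank_submatrix_add_finrank_pi_bot A e₁ c₁
  have h₂ := rank_submatrix_add_finrank_pi_bot A e₂ c₂
  have hSup := rank_submatrix_add_finrank_pi_bot A eSup cSup
  have hInf := rank_submatrix_add_finrank_pi_bot A eInf cInf
  rw [heSup, Submodule.pi_inter] at hSup
  rw [heInf, Submodule.pi_union] at hInf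
  set Z₁ := Submodule.pi (Set.range e₁) fun _ => (⊥ : Submodule K K)
  set Z₂ := Submodule.pi (Set.range e₂) fun _ => (⊥ : Submodule K K)
  set W₁ := Submodule.span K (A.col '' Set.range c₁) ⊔ Z₁
  set W₂ := Submodule.span K (A.col '' Set.range c₂) ⊔ Z₂
  have hWSup : Submodule.span K (A.col '' Set.range cSup) ⊔ (Z₁ ⊔ Z₂) ≤ W₁ ⊔ W₂ := by
    refine sup_le ((Submodule.span_mono (Set.image_mono hcSup)).trans ?_)
      (sup_le_sup le_sup_right le_sup_right)
    rw [Set.image_union, Submodule.span_union]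
    exact sup_le_sup le_sup_left le_sup_left
  have hWInf : Submodule.span K (A.col '' Set.range cInf) ⊔ (Z₁ ⊓ Z₂) ≤ W₁ ⊓ W₂ :=
    le_inf
      (sup_le_sup (Submodule.span_mono (Set.image_mono (hcInf.trans Set.inter_subset_left)))
        inf_le_left)
      (sup_le_sup (Submodule.span_mono (Set.image_mono (hcInf.trans Set.inter_subset_right)))
        inf_le_right)
  have hZ := Submodule.finrank_sup_add_finrank_inf_eq Z₁ Z₂
  have hW := Submodule.finrank_sup_add_finrank_inf_eq W₁ W₂
  have := Submodule.finrank_mono hWSup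
  have := Submodule.finrank_mono hWInf
  omega

end Matrix

section TransferMatrix

variable (n η : ℕ) (ℓ : ℕ → ℕ → ℕ) (Ω : Finset ℕ)

theorem rowIdx_union (S₁ S₂ : Finset ℕ) :
    rowIdx n Ω (S₁ ∪ S₂) = rowIdx n Ω S₁ ∩ rowIdx n Ω S₂ := by
  ext
  simp only [rowIdx, mem_insert, mem_sdiff, mem_union, mem_inter]
  tauto

theorem rowIdx_inter (S₁ S₂ : Finset ℕ) :
    rowIdx n Ω (S₁ ∩ S₂) = rowIdx n Ω S₁ ∪ rowIdx n Ω S₂ := by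
  ext
  simp only [rowIdx, mem_insert, mem_sdiff, mem_union, mem_inter]
  tauto

theorem rowIdx_subset_rowIdx_empty (S : Finset ℕ) : rowIdx n Ω S ⊆ rowIdx n Ω ∅ := by
  rw [rowIdx, rowIdx, sdiff_empty]
  exact insert_subset_insert _ sdiff_subset

theorem colIdx_union (S₁ S₂ : Finset ℕ) : colIdx Ω (S₁ ∪ S₂) = colIdx Ω S₁ ∪ colIdx Ω S₂ := by
  rw [colIdx, colIdx, colIdx, inter_union_distrib_left, insert_union_distrib]

theorem colIdx_inter (S₁ S₂ : Finset ℕ) : colIdx Ω (S₁ ∩ S₂) = colIdx Ω S₁ ∩ colIdx Ω S₂ := by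
  rw [colIdx, colIdx, colIdx, inter_inter_distrib_left, insert_inter_distrib]

def transferMatrix : Matrix (↥(rowIdx n Ω ∅) × Fin η) (ℕ × Fin η) (ZMod 2) :=
  Matrix.of fun p q => Dblk η (ℓ p.1 q.1) p.2 q.2

def rowEmb (S : Finset ℕ) : ↥(rowIdx n Ω S) × Fin η → ↥(rowIdx n Ω ∅) × Fin η :=
  Prod.map (Set.inclusion (coe_subset.2 (rowIdx_subset_rowIdx_empty n Ω S))) id

theorem range_rowEmb (S : Finset ℕ) :
    Set.range (rowEmb n η Ω S) =
      {r : ↥(rowIdx n Ω ∅) | ↑r ∈ rowIdx n Ω S} ×ˢ (Set.univ : Set (Fin η)) := by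
  rw [rowEmb, Set.range_prodMap, Set.range_inclusion, Set.range_id]
  rfl

def colEmb (S : Finset ℕ) : ↥(colIdx Ω S) × Fin η → ℕ × Fin η :=
  Prod.map Subtype.val id

theorem range_colEmb (S : Finset ℕ) :
    Set.range (colEmb η Ω S) = ↑(colIdx Ω S) ×ˢ (Set.univ : Set (Fin η)) := by
  rw [colEmb, Set.range_prodMap, Subtype.range_coe, Set.range_id]

theorem fRank_eq_rank_submatrix (S : Finset ℕ) :
    fRank n η ℓ Ω S =
      ((transferMatrix n η ℓ Ω).submatrix (rowEmb n η Ω S) (colEmb η Ω S)).rank :=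
  rfl

end TransferMatrix

theorem stmt3_general (n η : ℕ) (ℓ : ℕ → ℕ → ℕ)
    (Ω : Finset ℕ)
    (S₁ S₂ : Finset ℕ) :
    fRank n η ℓ Ω (S₁ ∪ S₂) + fRank n η ℓ Ω (S₁ ∩ S₂)
      ≤ fRank n η ℓ Ω S₁ + fRank n η ℓ Ω S₂ := by
  simp only [fRank_eq_rank_submatrix]
  refine (transferMatrix n η ℓ Ω).rank_submatrix_add_rank_submatrix_le ?_ ?_ ?_ ?_
  · simp only [range_rowEmb, rowIdx_union, mem_inter, Set.ofPred_and, Set.prod_inter_prod,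
      Set.inter_self]
  · simp only [range_rowEmb, rowIdx_inter, mem_union, Set.ofPred_or, Set.union_prod]
  · simp only [range_colEmb, colIdx_union, coe_union, Set.union_prod, subset_rfl]
  · simp only [range_colEmb, colIdx_inter, coe_inter, Set.prod_inter_prod,
      Set.inter_self, subset_rfl]

theorem stmt3 (n η : ℕ) (hn : 1 ≤ n) (hη : 1 ≤ η) (ℓ : ℕ → ℕ → ℕ)
    (hbound : ∀ i ≤ n, ∀ j ≤ n, ℓ i j ≤ η)
    (hds : ℓ 0 0 = 0) (hii : ∀ i, 1 ≤ i → i ≤ n → ℓ i i = 0)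
    (Ω : Finset ℕ) (hΩ : Ω ⊆ Finset.Icc 1 n)
    (S₁ S₂ : Finset ℕ) (hS₁ : S₁ ⊆ Finset.Icc 1 n) (hS₂ : S₂ ⊆ Finset.Icc 1 n) :
    fRank n η ℓ Ω (S₁ ∪ S₂) + fRank n η ℓ Ω (S₁ ∩ S₂)
      ≤ fRank n η ℓ Ω S₁ + fRank n η ℓ Ω S₂ :=
  stmt3_general n η ℓ Ω S₁ S₂
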